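/- arXiv:2303.04584 — 7 statements merged into one kernel-verified Lean document; each statement's English description precedes it below -/
import Mathlib

section
/- Let X be a real random variable whose density p is unimodal with mode μ, in the sense that p is nondecreasing on (-∞, μ] and nonincreasing on [μ, ∞). For the silence interval S = [μ−k, μ+k] with k > 0 and P(X ∈ S) > 0, the conditional variance satisfies E[(X−μ)² | X ∈ S] ≤ k²/3. -/
/-!
With `g x = (x - μ)² - k² / 3` the claim is `∫ g p ≤ 0` over `[μ - k, μ + k]`. On each half
`[μ - k, μ]` and `[μ, μ + k]`, `g` has integral zero and changes sign once, at distance `k / √3`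
from `μ`, while `p` is monotone there and smaller on the side where `g ≥ 0`. Hence replacing `p`
by its value at the sign change can only increase `∫ g p`, and the result is zero.
-/

open MeasureTheory Set
open scoped Interval

section SignChange

variable {f g : ℝ → ℝ} {a b c : ℝ}

theorem integral_mul_antitoneOn_nonpos (hc : c ∈ Icc a b) (hf : AntitoneOn f (Icc a b))
    (hg_nonpos : ∀ x ∈ Icc a c, g x ≤ 0) (hg_nonneg : ∀ x ∈ Icc c b, 0 ≤ g x)
    (hg_int : IntervalIntegrable g volume a b)
    (hgf_int : IntervalIntegrable (fun x => g x * f x) volume a b)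
    (hg : ∫ x in a..b, g x = 0) :
    ∫ x in a..b, g x * f x ≤ 0 := by
  have bound : ∀ x ∈ Icc a b, g x * f x ≤ g x * f c := by
    intro x hx
    rcases le_total x c with hxc | hcx
    · exact mul_le_mul_of_nonpos_left (hf hx hc hxc) (hg_nonpos x ⟨hx.1, hxc⟩)
    · exact mul_le_mul_of_nonneg_left (hf hc hx hcx) (hg_nonneg x ⟨hcx, hx.2⟩)
  calc ∫ x in a..b, g x * f x ≤ ∫ x in a..b, g x * f c :=
        intervalIntegral.integral_mono_on (hc.1.trans hc.2) hgf_int (hg_int.mul_const _) bound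
    _ = 0 := by rw [intervalIntegral.integral_mul_const, hg, zero_mul]

theorem integral_mul_monotoneOn_nonpos (hc : c ∈ Icc a b) (hf : MonotoneOn f (Icc a b))
    (hg_nonneg : ∀ x ∈ Icc a c, 0 ≤ g x) (hg_nonpos : ∀ x ∈ Icc c b, g x ≤ 0)
    (hg_int : IntervalIntegrable g volume a b)
    (hgf_int : IntervalIntegrable (fun x => g x * f x) volume a b)
    (hg : ∫ x in a..b, g x = 0) :
    ∫ x in a..b, g x * f x ≤ 0 := by
  simpa using integral_mul_antitoneOn_nonpos (g := fun x => -g x) hc hf.neg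
    (fun x hx => neg_nonpos.2 (hg_nonneg x hx)) (fun x hx => neg_nonneg.2 (hg_nonpos x hx))
    hg_int.neg (by simpa using hgf_int) (by simp [intervalIntegral.integral_neg, hg])

end SignChange

theorem integral_sq_sub_sq_div_three (μ t : ℝ) :
    ∫ x in μ..μ + t, ((x - μ) ^ 2 - t ^ 2 / 3) = 0 := by
  have hsq : ∫ x in μ..μ + t, (x - μ) ^ 2 = t ^ 3 / 3 := by
    rw [intervalIntegral.integral_comp_sub_right (fun x => x ^ 2), sub_self,
      add_sub_cancel_left, integral_pow]
    ring
  rw [intervalIntegral.integral_sub (Continuous.intervalIntegrable (by fun_prop) _ _)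
    intervalIntegrable_const, hsq, intervalIntegral.integral_const, smul_eq_mul]
  ring

theorem sq_sub_sq_div_three_eq_mul (y k : ℝ) :
    y ^ 2 - k ^ 2 / 3 = (y - k / √3) * (y + k / √3) := by
  have h : (k / √3) ^ 2 = k ^ 2 / 3 := by rw [div_pow, Real.sq_sqrt (by norm_num)]
  rw [← h]
  ring

section Halves

variable {p : ℝ → ℝ} {μ k : ℝ}

theorem integral_sq_sub_mul_antitoneOn_nonpos (hk : 0 ≤ k) (hp : AntitoneOn p (Icc μ (μ + k)))
    (hint : IntervalIntegrable (fun x => ((x - μ) ^ 2 - k ^ 2 / 3) * p x) volume μ (μ + k)) :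
    ∫ x in μ..μ + k, ((x - μ) ^ 2 - k ^ 2 / 3) * p x ≤ 0 := by
  have hs : k / √3 ≤ k := div_le_self hk (by simp [Real.one_le_sqrt])
  have hs0 : 0 ≤ k / √3 := by positivity
  refine integral_mul_antitoneOn_nonpos (c := μ + k / √3) ⟨by linarith, by linarith⟩ hp
    (fun x hx => ?_) (fun x hx => ?_) (Continuous.intervalIntegrable (by fun_prop) _ _) hint
    (integral_sq_sub_sq_div_three μ k)
  all_goals rw [sq_sub_sq_div_three_eq_mul]; nlinarith [hx.1, hx.2]

theorem integral_sq_sub_mul_monotoneOn_nonpos (hk : 0 ≤ k) (hp : MonotoneOn p (Icc (μ - k) μ))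
    (hint : IntervalIntegrable (fun x => ((x - μ) ^ 2 - k ^ 2 / 3) * p x) volume (μ - k) μ) :
    ∫ x in (μ - k)..μ, ((x - μ) ^ 2 - k ^ 2 / 3) * p x ≤ 0 := by
  have hs : k / √3 ≤ k := div_le_self hk (by simp [Real.one_le_sqrt])
  have hs0 : 0 ≤ k / √3 := by positivity
  have hg : ∫ x in (μ - k)..μ, ((x - μ) ^ 2 - k ^ 2 / 3) = 0 := by
    rw [intervalIntegral.integral_symm, neg_eq_zero, sub_eq_add_neg μ k, ← neg_sq k]
    exact integral_sq_sub_sq_div_three μ (-k)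
  refine integral_mul_monotoneOn_nonpos (c := μ - k / √3) ⟨by linarith, by linarith⟩ hp
    (fun x hx => ?_) (fun x hx => ?_) (Continuous.intervalIntegrable (by fun_prop) _ _) hint hg
  all_goals rw [sq_sub_sq_div_three_eq_mul]; nlinarith [hx.1, hx.2]

end Halves

theorem conditional_variance_le_of_unimodal_general
    (p : ℝ → ℝ) (μ k : ℝ) (hk : 0 < k)
    (hmono : MonotoneOn p (Set.Iic μ))
    (hanti : AntitoneOn p (Set.Ici μ))
    (hint : IntegrableOn p (Set.Icc (μ - k) (μ + k)))
    (hint2 : IntegrableOn (fun x => (x - μ) ^ 2 * p x) (Set.Icc (μ - k) (μ + k)))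
    (hpos : 0 < ∫ x in Set.Icc (μ - k) (μ + k), p x) :
    (∫ x in Set.Icc (μ - k) (μ + k), (x - μ) ^ 2 * p x) /
      (∫ x in Set.Icc (μ - k) (μ + k), p x) ≤ k ^ 2 / 3 := by
  set gp : ℝ → ℝ := fun x => ((x - μ) ^ 2 - k ^ 2 / 3) * p x with hgp
  have hgp_int : IntervalIntegrable gp volume (μ - k) (μ + k) := by
    refine IntegrableOn.intervalIntegrable ?_
    rw [uIcc_of_le (by linarith)]
    refine (hint2.sub (hint.const_mul (k ^ 2 / 3))).congr_fun (fun x _ => ?_) measurableSet_Icc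
    simp only [hgp, Pi.sub_apply]
    ring
  have hμ : μ ∈ [[μ - k, μ + k]] := by
    rw [uIcc_of_le (by linarith)]
    constructor <;> linarith
  have hint_left := hgp_int.mono_set (uIcc_subset_uIcc left_mem_uIcc hμ)
  have hint_right := hgp_int.mono_set (uIcc_subset_uIcc hμ right_mem_uIcc)
  have split : (∫ x in Icc (μ - k) (μ + k), (x - μ) ^ 2 * p x) -
      k ^ 2 / 3 * ∫ x in Icc (μ - k) (μ + k), p x =
      (∫ x in (μ - k)..μ, gp x) + ∫ x in μ..μ + k, gp x := by
    rw [intervalIntegral.integral_add_adjacent_intervals hint_left hint_right,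
      intervalIntegral.integral_of_le (by linarith), ← integral_Icc_eq_integral_Ioc,
      ← integral_const_mul, ← integral_sub hint2 (hint.const_mul _)]
    simp only [hgp, sub_mul]
  have left :=
    integral_sq_sub_mul_monotoneOn_nonpos hk.le (hmono.mono Icc_subset_Iic_self) hint_left
  have right :=
    integral_sq_sub_mul_antitoneOn_nonpos hk.le (hanti.mono Icc_subset_Ici_self) hint_right
  rw [div_le_iff₀ hpos]
  linarith

/-- For a unimodal density `p` with mode `μ`, the conditional variance of `X`
given that `X` lies in the silence interval `S = [μ-k, μ+k]` is at most `k²/3`.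
Here the conditional variance is expressed with integrals against the density. -/
theorem conditional_variance_le_of_unimodal
    (p : ℝ → ℝ) (μ k : ℝ) (hk : 0 < k)
    (hp : ∀ x, 0 ≤ p x)
    (hmono : MonotoneOn p (Set.Iic μ))
    (hanti : AntitoneOn p (Set.Ici μ))
    (hint : IntegrableOn p (Set.Icc (μ - k) (μ + k)))
    (hint2 : IntegrableOn (fun x => (x - μ) ^ 2 * p x) (Set.Icc (μ - k) (μ + k)))
    (hpos : 0 < ∫ x in Set.Icc (μ - k) (μ + k), p x) :
    (∫ x in Set.Icc (μ - k) (μ + k), (x - μ) ^ 2 * p x) /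
      (∫ x in Set.Icc (μ - k) (μ + k), p x) ≤ k ^ 2 / 3 :=
  conditional_variance_le_of_unimodal_general p μ k hk hmono hanti hint hint2 hpos
end

section
/- Let p be a density unimodal about μ, S = [μ−k, μ+k] with k>0 and P(X∈S)>0. Define Θ(t) = P(|X−μ| ≤ t | X ∈ S) and Λ(t) = min(t/k, 1) (the CDF of |U−μ| for U uniform on S). Then Θ(t) ≥ Λ(t) for all t ∈ [0, k]. -/
open MeasureTheory Set

lemma aux_setIntegral_le_const (p : ℝ → ℝ) (a b : ℝ) (hab : a ≤ b) (c : ℝ)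
    (hint : IntegrableOn p (Set.Ioc a b))
    (hle : ∀ x ∈ Set.Ioc a b, p x ≤ c) :
    ∫ x in Set.Ioc a b, p x ≤ (b - a) * c := by
  have h1 : ∫ x in Set.Ioc a b, p x ≤ ∫ _x in Set.Ioc a b, c :=
    setIntegral_mono_on hint (integrableOn_const (by
      rw [Real.volume_Ioc]; exact ENNReal.ofReal_ne_top)) measurableSet_Ioc hle
  calc ∫ x in Set.Ioc a b, p x ≤ ∫ _x in Set.Ioc a b, c := h1
    _ = (b - a) * c := by
        rw [setIntegral_const, Real.volume_real_Ioc_of_le hab,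
          smul_eq_mul]

lemma aux_const_le_setIntegral (p : ℝ → ℝ) (a b : ℝ) (hab : a ≤ b) (c : ℝ)
    (hint : IntegrableOn p (Set.Ioc a b))
    (hle : ∀ x ∈ Set.Ioc a b, c ≤ p x) :
    (b - a) * c ≤ ∫ x in Set.Ioc a b, p x := by
  have h1 : ∫ _x in Set.Ioc a b, c ≤ ∫ x in Set.Ioc a b, p x :=
    setIntegral_mono_on (integrableOn_const (by
      rw [Real.volume_Ioc]; exact ENNReal.ofReal_ne_top)) hint measurableSet_Ioc hle
  calc (b - a) * c = ∫ _x in Set.Ioc a b, c := by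
        rw [setIntegral_const, Real.volume_real_Ioc_of_le hab,
          smul_eq_mul]
    _ ≤ ∫ x in Set.Ioc a b, p x := h1

/-- The conditional CDF of `|X - μ|` given `X ∈ [μ-k, μ+k]`, for a unimodal
density `p`, dominates the CDF `t ↦ t/k` of the uniform distribution. -/
theorem conditional_cdf_dominates_uniform_of_unimodal
    (p : ℝ → ℝ) (μ k : ℝ) (hk : 0 < k)
    (hp : ∀ x, 0 ≤ p x)
    (hmono : MonotoneOn p (Set.Iic μ))
    (hanti : AntitoneOn p (Set.Ici μ))
    (hint : IntegrableOn p (Set.Icc (μ - k) (μ + k)))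
    (hpos : 0 < ∫ x in Set.Icc (μ - k) (μ + k), p x) :
    ∀ t ∈ Set.Icc (0 : ℝ) k,
      t / k ≤ (∫ x in Set.Icc (μ - t) (μ + t), p x) /
        (∫ x in Set.Icc (μ - k) (μ + k), p x) := by
  intro t ht
  obtain ⟨ht0, htk⟩ := ht
  -- order facts
  have h1 : μ - k ≤ μ - t := by linarith
  have h2 : μ - t ≤ μ := by linarith
  have h3 : μ ≤ μ + t := by linarith
  have h4 : μ + t ≤ μ + k := by linarith
  -- integrability on pieces
  have hintA : IntegrableOn p (Set.Ioc (μ - k) (μ - t)) :=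
    hint.mono_set (fun x hx => ⟨le_of_lt hx.1, by linarith [hx.2]⟩)
  have hintB1 : IntegrableOn p (Set.Ioc (μ - t) μ) :=
    hint.mono_set (fun x hx => ⟨by linarith [hx.1], by linarith [hx.2]⟩)
  have hintB2 : IntegrableOn p (Set.Ioc μ (μ + t)) :=
    hint.mono_set (fun x hx => ⟨by linarith [hx.1], by linarith [hx.2]⟩)
  have hintC : IntegrableOn p (Set.Ioc (μ + t) (μ + k)) :=
    hint.mono_set (fun x hx => ⟨by linarith [hx.1], hx.2⟩)
  have hintAB : IntegrableOn p (Set.Ioc (μ - k) μ) :=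
    hint.mono_set (fun x hx => ⟨le_of_lt hx.1, by linarith [hx.2]⟩)
  have hintABB : IntegrableOn p (Set.Ioc (μ - k) (μ + t)) :=
    hint.mono_set (fun x hx => ⟨le_of_lt hx.1, by linarith [hx.2]⟩)
  set A := ∫ x in Set.Ioc (μ - k) (μ - t), p x with hA
  set B1 := ∫ x in Set.Ioc (μ - t) μ, p x with hB1
  set B2 := ∫ x in Set.Ioc μ (μ + t), p x with hB2
  set C := ∫ x in Set.Ioc (μ + t) (μ + k), p x with hC
  -- splitting
  have hIt : (∫ x in Set.Icc (μ - t) (μ + t), p x) = B1 + B2 := by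
    rw [integral_Icc_eq_integral_Ioc, ← Set.Ioc_union_Ioc_eq_Ioc h2 h3,
      setIntegral_union (Set.Ioc_disjoint_Ioc_of_le le_rfl) measurableSet_Ioc hintB1 hintB2]
  have e1 : (∫ x in Set.Ioc (μ - k) μ, p x) = A + B1 := by
    rw [← Set.Ioc_union_Ioc_eq_Ioc h1 h2,
      setIntegral_union (Set.Ioc_disjoint_Ioc_of_le le_rfl) measurableSet_Ioc hintA hintB1]
  have e2 : (∫ x in Set.Ioc (μ - k) (μ + t), p x) = (A + B1) + B2 := by
    rw [← Set.Ioc_union_Ioc_eq_Ioc (le_trans h1 h2) h3,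
      setIntegral_union (Set.Ioc_disjoint_Ioc_of_le le_rfl) measurableSet_Ioc hintAB hintB2, e1]
  have hIk : (∫ x in Set.Icc (μ - k) (μ + k), p x) = A + (B1 + B2) + C := by
    rw [integral_Icc_eq_integral_Ioc,
      ← Set.Ioc_union_Ioc_eq_Ioc (le_trans (le_trans h1 h2) h3) h4,
      setIntegral_union (Set.Ioc_disjoint_Ioc_of_le le_rfl) measurableSet_Ioc
        hintABB hintC, e2]
    ring
  -- bounds
  have hAle : A ≤ (k - t) * p (μ - t) := by
    have : ((μ - t) - (μ - k)) * p (μ - t) = (k - t) * p (μ - t) := by ring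
    rw [← this]
    refine aux_setIntegral_le_const p _ _ h1 _ hintA fun x hx => ?_
    exact hmono (by simp only [Set.mem_Iic]; linarith [hx.2]) (by simp; linarith) hx.2
  have hB1ge : t * p (μ - t) ≤ B1 := by
    have : (μ - (μ - t)) * p (μ - t) = t * p (μ - t) := by ring
    rw [← this]
    refine aux_const_le_setIntegral p _ _ h2 _ hintB1 fun x hx => ?_
    exact hmono (by simp; linarith) (by simp only [Set.mem_Iic]; linarith [hx.2])
      (le_of_lt hx.1)
  have hB2ge : t * p (μ + t) ≤ B2 := by
    have : ((μ + t) - μ) * p (μ + t) = t * p (μ + t) := by ring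
    rw [← this]
    refine aux_const_le_setIntegral p _ _ h3 _ hintB2 fun x hx => ?_
    exact hanti (le_of_lt hx.1) (by simp; linarith) hx.2
  have hCle : C ≤ (k - t) * p (μ + t) := by
    have : ((μ + k) - (μ + t)) * p (μ + t) = (k - t) * p (μ + t) := by ring
    rw [← this]
    refine aux_setIntegral_le_const p _ _ h4 _ hintC fun x hx => ?_
    exact hanti (by simp; linarith) (by simp only [Set.mem_Ici]; linarith [hx.1])
      (le_of_lt hx.1)
  -- key inequality: t * A ≤ (k - t) * B1, t * C ≤ (k - t) * B2
  have hkt : 0 ≤ k - t := by linarith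
  have key1 : t * A ≤ (k - t) * B1 := by
    calc t * A ≤ t * ((k - t) * p (μ - t)) := by
          exact mul_le_mul_of_nonneg_left hAle ht0
      _ = (k - t) * (t * p (μ - t)) := by ring
      _ ≤ (k - t) * B1 := mul_le_mul_of_nonneg_left hB1ge hkt
  have key2 : t * C ≤ (k - t) * B2 := by
    calc t * C ≤ t * ((k - t) * p (μ + t)) := mul_le_mul_of_nonneg_left hCle ht0
      _ = (k - t) * (t * p (μ + t)) := by ring
      _ ≤ (k - t) * B2 := mul_le_mul_of_nonneg_left hB2ge hkt
  rw [div_le_div_iff₀ hk hpos, hIt, hIk]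
  nlinarith [key1, key2]
end

section
/- Equality case of the midpoint/conditional-mean speed comparison: for p log-concave on [a,b] with ∫_a^b p = η > 0, p(a),p(b) > 0, if (η/2)·(p(a)+p(b)) = (b−a)·p(a)·p(b), then p is constant on [a,b], equal to η/(b−a). -/
open MeasureTheory Set


open Real Set

lemma aux_log_lt (s : ℝ) (hs : 1 < s) : 2 * Real.log s < s - 1/s := by
  have hmono : StrictMonoOn (fun x : ℝ => x - 1/x - 2 * Real.log x) (Set.Ici 1) := by
    apply strictMonoOn_of_deriv_pos (convex_Ici 1)
    · apply ContinuousOn.sub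
      · apply ContinuousOn.sub continuousOn_id
        exact continuousOn_const.div continuousOn_id (fun x hx => by
          have : (1:ℝ) ≤ x := hx; linarith)
      · exact (continuousOn_const.mul (Real.continuousOn_log.mono (by
          intro x hx; simp at hx ⊢; linarith)))
    · intro x hx
      rw [interior_Ici] at hx
      have hx1 : (1:ℝ) < x := hx
      have hx0 : (0:ℝ) < x := by linarith
      have hd : HasDerivAt (fun x : ℝ => x - 1/x - 2 * Real.log x)
          (1 - (-(1/x^2)) - 2 * (1/x)) x := by
        have h1 : HasDerivAt (fun x : ℝ => 1/x) (-(1/x^2)) x := by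
          simpa [one_div] using (hasDerivAt_inv (ne_of_gt hx0))
        have h2 : HasDerivAt Real.log (1/x) x := by
          simpa [one_div] using Real.hasDerivAt_log (ne_of_gt hx0)
        exact ((hasDerivAt_id x).sub h1).sub ((h2.const_mul 2))
      rw [hd.deriv]
      have h : (1 : ℝ) - -(1/x^2) - 2 * (1/x) = ((x-1)^2)/x^2 := by field_simp; ring
      rw [h]
      have h2 : 0 < (x - 1)^2 := by
        have : x - 1 ≠ 0 := by linarith
        positivity
      exact div_pos h2 (by positivity)
  have := hmono (Set.self_mem_Ici) (show s ∈ Set.Ici (1:ℝ) from le_of_lt hs) hs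
  simp only [Real.log_one] at this
  norm_num at this
  rw [one_div]
  linarith

lemma logMean_gt_harm : ∀ (A B : ℝ), 0 < A → 0 < B → A < B →
    2*A*B/(A+B) < (B - A)/(Real.log B - Real.log A) := by
  intro A B hA hB hlt
  have hlog : Real.log A < Real.log B := Real.log_lt_log hA hlt
  have hs : 1 < B / A := (one_lt_div hA).2 hlt
  have key := aux_log_lt (B/A) hs
  rw [Real.log_div (ne_of_gt hB) (ne_of_gt hA)] at key
  -- key : 2 * (log B - log A) < B/A - 1/(B/A)
  have h1 : 1/(B/A) = A/B := by field_simp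
  rw [h1] at key
  -- B/A - A/B = (B^2 - A^2)/(A*B)
  rw [div_lt_div_iff₀ (by positivity) (by linarith)]
  -- 2*A*B * (log B - log A) < (B - A) * (A + B)
  have h2 : B/A - A/B = (B^2 - A^2)/(A*B) := by field_simp
  rw [h2] at key
  have h3 : 2 * (Real.log B - Real.log A) * (A*B) < B^2 - A^2 := by
    rw [← lt_div_iff₀ (by positivity)]; exact key
  nlinarith [h3]

lemma logMean_gt_harm' (A B : ℝ) (hA : 0 < A) (hB : 0 < B) (hne : A ≠ B) :
    2*A*B/(A+B) < (B - A)/(Real.log B - Real.log A) := by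
  rcases lt_or_gt_of_ne hne with h | h
  · exact logMean_gt_harm A B hA hB h
  · have := logMean_gt_harm B A hB hA h
    have e1 : 2*A*B = 2*B*A := by ring
    have e2 : A + B = B + A := by ring
    have e3 : (B - A)/(Real.log B - Real.log A) = (A - B)/(Real.log A - Real.log B) := by
      rw [← neg_div_neg_eq]; ring_nf
    rw [e1, e2, e3]; exact this


lemma concave_bound (p : ℝ → ℝ) (a b : ℝ)
    (hconc : ConcaveOn ℝ (Set.Icc a b) (Real.log ∘ p))
    (c d : ℝ) (hc : c ∈ Set.Icc a b) (hd : d ∈ Set.Icc a b) (hcd : c < d)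
    (x : ℝ) (hx : x ∈ Set.Icc c d) :
    (1 - (x-c)/(d-c)) * Real.log (p c) + ((x-c)/(d-c)) * Real.log (p d)
      ≤ Real.log (p x) := by
  set t := (x-c)/(d-c) with ht
  have hdc : 0 < d - c := by linarith [hcd]
  have ht0 : 0 ≤ t := div_nonneg (by linarith [hx.1]) hdc.le
  have ht1 : t ≤ 1 := (div_le_one hdc).2 (by linarith [hx.2])
  have hne : d - c ≠ 0 := ne_of_gt hdc
  have hx_eq : x = (1 - t) * c + t * d := by
    rw [ht]; field_simp; ring
  have h2 := hconc.2 hc hd (by linarith : (0:ℝ) ≤ 1 - t) ht0 (by ring)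
  rw [smul_eq_mul, smul_eq_mul, smul_eq_mul, smul_eq_mul] at h2
  rw [hx_eq]
  exact h2

lemma pos_on (p : ℝ → ℝ) (a b : ℝ) (hab : a < b)
    (hp : ∀ x, 0 ≤ p x)
    (hcont : ContinuousOn p (Set.Icc a b))
    (hconc : ConcaveOn ℝ (Set.Icc a b) (Real.log ∘ p))
    (hpa : 0 < p a) :
    ∀ x ∈ Set.Icc a b, 0 < p x := by
  by_contra hcon
  push_neg at hcon
  obtain ⟨x₀, hx₀, hx₀le⟩ := hcon
  have hx₀0 : p x₀ = 0 := le_antisymm hx₀le (hp x₀)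
  set Z : Set ℝ := Set.Icc a b ∩ p ⁻¹' {0} with hZ
  have hZne : Z.Nonempty := ⟨x₀, hx₀, by simpa using hx₀0⟩
  have hZclosed : IsClosed Z :=
    hcont.preimage_isClosed_of_isClosed isClosed_Icc isClosed_singleton
  have hZbdd : BddBelow Z := ⟨a, fun z hz => hz.1.1⟩
  set c := sInf Z with hc
  have hcZ : c ∈ Z := hZclosed.csInf_mem hZne hZbdd
  have hpc : p c = 0 := by simpa using hcZ.2
  have hcab : c ∈ Set.Icc a b := hcZ.1
  have hac : a < c := by
    rcases eq_or_lt_of_le hcab.1 with h | h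
    · exfalso; rw [← h] at hpc; rw [hpc] at hpa; exact lt_irrefl 0 hpa
    · exact h
  set m := min (Real.log (p a)) 0 with hm
  -- lower bound on log p on [a, c]
  have hlb : ∀ x ∈ Set.Icc a c, m ≤ Real.log (p x) := by
    intro x hx
    have h := concave_bound p a b hconc a c (Set.left_mem_Icc.2 hab.le) hcab hac x hx
    rw [hpc, Real.log_zero, mul_zero, add_zero] at h
    set t := (x-a)/(c-a)
    have ht1 : t ≤ 1 := by
      have : 0 < c - a := by linarith
      exact (div_le_one this).2 (by linarith [hx.2])
    have ht0 : 0 ≤ t := div_nonneg (by linarith [hx.1]) (by linarith)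
    rcases le_or_gt 0 (Real.log (p a)) with hl | hl
    · have : 0 ≤ (1 - t) * Real.log (p a) := mul_nonneg (by linarith) hl
      calc m ≤ 0 := min_le_right _ _
        _ ≤ (1 - t) * Real.log (p a) := this
        _ ≤ Real.log (p x) := h
    · have : Real.log (p a) ≤ (1 - t) * Real.log (p a) := by nlinarith
      calc m ≤ Real.log (p a) := min_le_left _ _
        _ ≤ (1 - t) * Real.log (p a) := this
        _ ≤ Real.log (p x) := h
  -- points just left of c have small p but positive
  have hcont_c : ContinuousWithinAt p (Set.Icc a b) c := hcont c hcab
  have hmem : p ⁻¹' (Set.Iio (Real.exp m)) ∈ nhdsWithin c (Set.Icc a b) := by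
    apply hcont_c
    rw [hpc]
    exact Iio_mem_nhds (Real.exp_pos m)
  rw [Metric.mem_nhdsWithin_iff] at hmem
  obtain ⟨δ, hδ, hball⟩ := hmem
  set x := max a (c - δ/2) with hxdef
  have hxc : x < c := max_lt hac (by linarith)
  have hxa : a ≤ x := le_max_left _ _
  have hxb : x ≤ b := le_trans hxc.le hcab.2
  have hxball : x ∈ Metric.ball c δ := by
    rw [Metric.mem_ball, Real.dist_eq, abs_lt]
    constructor
    · have : c - δ/2 ≤ x := le_max_right _ _
      linarith
    · linarith
  have hxsmall : p x < Real.exp m := hball ⟨hxball, ⟨hxa, hxb⟩⟩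
  have hxpos : 0 < p x := by
    rcases eq_or_lt_of_le (hp x) with h | h
    · exfalso
      have hxZ : x ∈ Z := ⟨⟨hxa, hxb⟩, by simp [← h]⟩
      have := csInf_le hZbdd hxZ
      rw [← hc] at this
      linarith
    · exact h
  have hlog : Real.log (p x) < m := by
    have := Real.log_lt_log hxpos hxsmall
    rwa [Real.log_exp] at this
  have := hlb x ⟨hxa, hxc.le⟩
  linarith

lemma eq_zero_of_integral_zero (f : ℝ → ℝ) (a b : ℝ) (hab : a < b)
    (hc : ContinuousOn f (Set.Icc a b)) (hnn : ∀ x ∈ Set.Icc a b, 0 ≤ f x)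
    (hint : ∫ x in a..b, f x = 0) : ∀ x ∈ Set.Icc a b, f x = 0 := by
  by_contra hcon
  push_neg at hcon
  obtain ⟨x₀, hx₀, hx₀ne⟩ := hcon
  have hx₀pos : 0 < f x₀ := lt_of_le_of_ne (hnn x₀ hx₀) (Ne.symm hx₀ne)
  have hmem : f ⁻¹' (Set.Ioi (f x₀ / 2)) ∈ nhdsWithin x₀ (Set.Icc a b) := by
    apply hc x₀ hx₀
    exact Ioi_mem_nhds (by linarith)
  rw [Metric.mem_nhdsWithin_iff] at hmem
  obtain ⟨δ, hδ, hball⟩ := hmem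
  set u := max a (x₀ - δ/2) with hu
  set v := min b (x₀ + δ/2) with hv
  have hau : a ≤ u := le_max_left _ _
  have hvb : v ≤ b := min_le_left _ _
  have huv : u < v := by
    rcases lt_or_eq_of_le hx₀.2 with h | h
    · have h1 : u ≤ x₀ := max_le hx₀.1 (by linarith)
      have h2 : x₀ < v := lt_min h (by linarith)
      linarith
    · have h1 : u < x₀ := max_lt (h ▸ hab) (by linarith)
      have h2 : x₀ ≤ v := le_min (le_of_eq h) (by linarith)
      linarith
  have hsub : Set.Icc u v ⊆ Metric.ball x₀ δ ∩ Set.Icc a b := by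
    intro y hy
    constructor
    · rw [Metric.mem_ball, Real.dist_eq, abs_lt]
      have h1 : x₀ - δ/2 ≤ u := le_max_right _ _
      have h2 : v ≤ x₀ + δ/2 := min_le_right _ _
      constructor <;> [linarith [hy.1]; linarith [hy.2]]
    · exact ⟨le_trans hau hy.1, le_trans hy.2 hvb⟩
  have hbig : ∀ y ∈ Set.Icc u v, f x₀ / 2 ≤ f y := fun y hy => (hball (hsub hy)).le
  have hIuv : Set.Icc u v ⊆ Set.Icc a b := fun y hy => ⟨le_trans hau hy.1, le_trans hy.2 hvb⟩
  have hint_uv : IntervalIntegrable f volume u v := by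
    apply ContinuousOn.intervalIntegrable
    rw [Set.uIcc_of_le huv.le]; exact hc.mono hIuv
  have hlow : (v - u) * (f x₀ / 2) ≤ ∫ x in u..v, f x := by
    have := intervalIntegral.integral_mono_on huv.le
      (intervalIntegrable_const) hint_uv hbig
    simpa [mul_div_assoc] using this
  have hIau : IntervalIntegrable f volume a u := by
    apply ContinuousOn.intervalIntegrable
    rw [Set.uIcc_of_le hau]
    exact hc.mono (Set.Icc_subset_Icc le_rfl (le_trans huv.le hvb))
  have hIvb : IntervalIntegrable f volume v b := by
    apply ContinuousOn.intervalIntegrable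
    rw [Set.uIcc_of_le hvb]
    exact hc.mono (Set.Icc_subset_Icc (le_trans hau huv.le) le_rfl)
  have hsplit : (∫ x in a..u, f x) + (∫ x in u..v, f x) + (∫ x in v..b, f x)
      = ∫ x in a..b, f x := by
    rw [intervalIntegral.integral_add_adjacent_intervals hIau hint_uv,
      intervalIntegral.integral_add_adjacent_intervals (hIau.trans hint_uv) hIvb]
  have h1 : 0 ≤ ∫ x in a..u, f x :=
    intervalIntegral.integral_nonneg hau (fun y hy => hnn y ⟨hy.1, le_trans hy.2 (le_trans huv.le hvb)⟩)
  have h2 : 0 ≤ ∫ x in v..b, f x :=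
    intervalIntegral.integral_nonneg hvb (fun y hy => hnn y ⟨le_trans hau (le_trans huv.le hy.1), hy.2⟩)
  have h3 : 0 < (v - u) * (f x₀ / 2) := by
    apply mul_pos (by linarith) (by linarith)
  rw [hint] at hsplit
  linarith


lemma integral_exp_linear (a b c m : ℝ) (hm : m ≠ 0) :
    ∫ x in a..b, Real.exp (c + (x - a) * m)
      = (Real.exp (c + (b - a) * m) - Real.exp c) / m := by
  have hderiv : ∀ x ∈ Set.uIcc a b,
      HasDerivAt (fun x => Real.exp (c + (x - a) * m) / m)
        (Real.exp (c + (x - a) * m)) x := by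
    intro x _
    have h1 : HasDerivAt (fun x : ℝ => c + (x - a) * m) m x := by
      simpa using (((hasDerivAt_id x).sub_const a).mul_const m).const_add c
    have h2 := (h1.exp).div_const m
    simpa [mul_div_cancel_right₀ _ hm] using h2
  have hcont : IntervalIntegrable (fun x => Real.exp (c + (x - a) * m)) volume a b := by
    apply Continuous.intervalIntegrable
    continuity
  have := intervalIntegral.integral_eq_sub_of_hasDerivAt hderiv hcont
  rw [this]
  rw [show a - a = 0 by ring]
  rw [zero_mul, add_zero]
  ring
/-- Equality case of the midpoint/conditional-mean speed comparison: if
`(η/2)·(p(a)+p(b)) = (b−a)·p(a)·p(b)`, then the log-concave density `p` is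
constant, equal to `η/(b-a)`, on `[a,b]`. -/


theorem eq_const_of_speed_comparison_eq
    (p : ℝ → ℝ) (a b η : ℝ) (hab : a < b)
    (hp : ∀ x, 0 ≤ p x)
    (hcont : ContinuousOn p (Set.Icc a b))
    (hconc : ConcaveOn ℝ (Set.Icc a b) (Real.log ∘ p))
    (hmass : ∫ x in a..b, p x = η) (hη : 0 < η)
    (hpa : 0 < p a) (hpb : 0 < p b)
    (heq : (η / 2) * (p a + p b) = (b - a) * p a * p b) :
    ∀ x ∈ Set.Icc a b, p x = η / (b - a) := by
  have hba : (0:ℝ) < b - a := by linarith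
  set A := p a with hA
  set B := p b with hB
  have hpos := pos_on p a b hab hp hcont hconc hpa
  set m := (Real.log B - Real.log A) / (b - a) with hmdef
  set g : ℝ → ℝ := fun x => Real.exp (Real.log A + (x - a) * m) with hg
  have hlb : ∀ x ∈ Set.Icc a b, g x ≤ p x := by
    intro x hx
    have h := concave_bound p a b hconc a b (Set.left_mem_Icc.2 hab.le)
      (Set.right_mem_Icc.2 hab.le) hab x hx
    have heq2 : (1 - (x-a)/(b-a)) * Real.log A + ((x-a)/(b-a)) * Real.log B
        = Real.log A + (x - a) * m := by
      rw [hmdef]; field_simp; ring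
    rw [heq2] at h
    calc g x ≤ Real.exp (Real.log (p x)) := Real.exp_le_exp.2 h
      _ = p x := Real.exp_log (hpos x hx)
  have hint_p : IntervalIntegrable p volume a b := by
    apply ContinuousOn.intervalIntegrable
    rw [Set.uIcc_of_le hab.le]; exact hcont
  have hint_g : IntervalIntegrable g volume a b := by
    apply Continuous.intervalIntegrable
    rw [hg]; continuity
  have hle : (∫ x in a..b, g x) ≤ η := by
    rw [← hmass]
    exact intervalIntegral.integral_mono_on hab.le hint_g hint_p hlb
  by_cases hAB : A = B
  · -- constant case
    have hA0 : A ≠ 0 := ne_of_gt hpa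
    have hη_eq : η = (b - a) * A := by
      have h1 : η * A = ((b - a) * A) * A := by
        have := heq; rw [← hAB] at this; nlinarith [this]
      exact mul_right_cancel₀ hA0 h1
    have hm0 : m = 0 := by rw [hmdef, hAB]; simp
    have hgA : ∀ x, g x = A := by
      intro x; rw [hg]; simp [hm0, Real.exp_log hpa]
    have hq0 : ∀ x ∈ Set.Icc a b, p x - A = 0 := by
      apply eq_zero_of_integral_zero _ a b hab
      · exact hcont.sub continuousOn_const
      · intro x hx
        have := hlb x hx; rw [hgA x] at this; linarith
      · rw [intervalIntegral.integral_sub hint_p intervalIntegrable_const,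
          intervalIntegral.integral_const, hmass, hη_eq]
        simp [smul_eq_mul]
    intro x hx
    have := hq0 x hx
    have hAv : A = η / (b - a) := by
      rw [hη_eq]; field_simp
    linarith [hAv ▸ this]
  · -- strict case: contradiction
    exfalso
    have hABpos : (0:ℝ) < A + B := by linarith
    have hlne : Real.log B - Real.log A ≠ 0 := by
      intro h
      apply hAB
      have hlog : Real.log A = Real.log B := by linarith
      calc A = Real.exp (Real.log A) := (Real.exp_log hpa).symm
        _ = Real.exp (Real.log B) := by rw [hlog]
        _ = B := Real.exp_log hpb
    have hm0 : m ≠ 0 := by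
      rw [hmdef]
      exact div_ne_zero hlne (ne_of_gt hba)
    have hInt : (∫ x in a..b, g x) = (B - A) / m := by
      rw [hg, integral_exp_linear a b (Real.log A) m hm0]
      have h1 : Real.log A + (b - a) * m = Real.log B := by
        rw [hmdef]; field_simp; ring
      rw [h1, Real.exp_log hpb, Real.exp_log hpa]
    have hlm := logMean_gt_harm' A B hpa hpb hAB
    have e1 : (B - A)/m = (b - a) * ((B - A)/(Real.log B - Real.log A)) := by
      rw [hmdef]; field_simp
    have hη_eq : η = (b - a) * (2*A*B/(A+B)) := by
      rw [show (b - a) * (2*A*B/(A+B)) = (b - a) * (2*A*B) / (A+B) by ring,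
        eq_div_iff (ne_of_gt hABpos)]
      linear_combination 2 * heq
    have hfinal : η < (B - A)/m := by
      rw [hη_eq, e1]
      exact mul_lt_mul_of_pos_left hlm hba
    rw [hInt] at hle
    linarith
end

section
/- Centering cannot increase distortion: under the setup of the exchange inequality, with X̂_C the δ-optimal estimate for the set C, we have E[δ(X − X̂_A) | X ∈ A] ≥ E[δ(X − X̂_C) | X ∈ C], where X̂_A minimizes Y ↦ E[δ(X − Y) | X ∈ A]. -/
open MeasureTheory Set

/-- Centering cannot increase distortion: with `X̂_A` the δ-optimal estimate for
the set `A`, and `C` the re-centered sub-level set of the same probability mass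
with δ-optimal estimate `X̂_C`, the conditional distortion over `C` is no larger
than that over `A`. -/
theorem centering_not_increase_distortion
    {n : ℕ} {Ω : Type*} [MeasurableSpace Ω] (ℙ : Measure Ω) [IsProbabilityMeasure ℙ]
    (X : Ω → (Fin n → ℝ)) (hX : Measurable X) [MeasureTheory.HasPDF X ℙ]
    (δ : (Fin n → ℝ) → ℝ) (hδmeas : Measurable δ) (hδpos : ∀ x, 0 ≤ δ x)
    (XhatA XhatC : Fin n → ℝ) (A C : Set (Fin n → ℝ)) (η r : ℝ)
    (hA : MeasurableSet A)
    (hC : C = {x | δ (x - XhatA) ≤ r})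
    (hη : η ∈ Set.Ioo (0 : ℝ) 1) (hr : 0 ≤ r)
    (hmassA : ℙ (X ⁻¹' A) = ENNReal.ofReal η)
    (hmassC : ℙ (X ⁻¹' C) = ENNReal.ofReal η)
    (hout : ∀ x ∈ A \ C, r < δ (x - XhatA))
    (hintA : ∀ Y : Fin n → ℝ,
      Integrable (fun ω => δ (X ω - Y)) (ℙ.restrict (X ⁻¹' A)))
    (hintC : ∀ Y : Fin n → ℝ,
      Integrable (fun ω => δ (X ω - Y)) (ℙ.restrict (X ⁻¹' C)))
    (hoptA : ∀ Y : Fin n → ℝ,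
      (∫ ω in X ⁻¹' A, δ (X ω - XhatA) ∂ℙ) ≤ ∫ ω in X ⁻¹' A, δ (X ω - Y) ∂ℙ)
    (hoptC : ∀ Y : Fin n → ℝ,
      (∫ ω in X ⁻¹' C, δ (X ω - XhatC) ∂ℙ) ≤ ∫ ω in X ⁻¹' C, δ (X ω - Y) ∂ℙ) :
    (∫ ω in X ⁻¹' C, δ (X ω - XhatC) ∂ℙ) / η ≤
      (∫ ω in X ⁻¹' A, δ (X ω - XhatA) ∂ℙ) / η := by
  have hη0 : 0 < η := hη.1
  set f : Ω → ℝ := fun ω => δ (X ω - XhatA) with hf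
  have hS : MeasurableSet (X ⁻¹' A) := hX hA
  have hCmeas : MeasurableSet C := by
    rw [hC]
    exact (hδmeas.comp (measurable_id.sub_const XhatA)) measurableSet_Iic
  have hT : MeasurableSet (X ⁻¹' C) := hX hCmeas
  set S := X ⁻¹' A
  set T := X ⁻¹' C
  have hfS : IntegrableOn f S ℙ := hintA XhatA
  have hfT : IntegrableOn f T ℙ := hintC XhatA
  -- split integrals
  have hsplitT : ∫ ω in T ∩ S, f ω ∂ℙ + ∫ ω in T \ S, f ω ∂ℙ = ∫ ω in T, f ω ∂ℙ :=
    integral_inter_add_diff hS hfT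
  have hsplitS : ∫ ω in S ∩ T, f ω ∂ℙ + ∫ ω in S \ T, f ω ∂ℙ = ∫ ω in S, f ω ∂ℙ :=
    integral_inter_add_diff hT hfS
  -- mass equality of the symmetric differences
  have hmeq : ℙ (T \ S) = ℙ (S \ T) := by
    have h1 : ℙ (T ∩ S) + ℙ (T \ S) = ℙ T := measure_inter_add_diff T hS
    have h2 : ℙ (S ∩ T) + ℙ (S \ T) = ℙ S := measure_inter_add_diff S hT
    have hST : ℙ S = ℙ T := by rw [hmassA, hmassC]
    have hi : ℙ (T ∩ S) = ℙ (S ∩ T) := by rw [Set.inter_comm]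
    have hfin : ℙ (T ∩ S) ≠ ⊤ := (measure_lt_top ℙ _).ne
    have : ℙ (T ∩ S) + ℙ (T \ S) = ℙ (T ∩ S) + ℙ (S \ T) := by
      rw [h1, hi, h2, hST]
    exact (ENNReal.add_right_inj hfin).mp this
  -- bound on T \ S
  have hboundT : ∫ ω in T \ S, f ω ∂ℙ ≤ r * (ℙ (T \ S)).toReal := by
    have : ∫ ω in T \ S, f ω ∂ℙ ≤ ∫ _ω in T \ S, r ∂ℙ := by
      refine setIntegral_mono_on (hfT.mono_set Set.diff_subset)
        (integrableOn_const (measure_lt_top ℙ _).ne) (hT.diff hS) ?_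
      intro ω hω
      have : X ω ∈ C := hω.1
      rw [hC] at this
      exact this
    simpa [smul_eq_mul, mul_comm, measureReal_def] using this
  -- bound on S \ T
  have hboundS : r * (ℙ (S \ T)).toReal ≤ ∫ ω in S \ T, f ω ∂ℙ := by
    have : ∫ _ω in S \ T, r ∂ℙ ≤ ∫ ω in S \ T, f ω ∂ℙ := by
      refine setIntegral_mono_on (integrableOn_const (measure_lt_top ℙ _).ne)
        (hfS.mono_set Set.diff_subset) (hS.diff hT) ?_
      intro ω hω
      have hmem : X ω ∈ A \ C := ⟨hω.1, hω.2⟩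
      exact (hout _ hmem).le
    simpa [smul_eq_mul, mul_comm, measureReal_def] using this
  -- exchange inequality: ∫_T f ≤ ∫_S f
  have hex : ∫ ω in T, f ω ∂ℙ ≤ ∫ ω in S, f ω ∂ℙ := by
    rw [← hsplitT, ← hsplitS, Set.inter_comm T S]
    have := hmeq ▸ hboundT
    linarith
  have h1 : ∫ ω in T, δ (X ω - XhatC) ∂ℙ ≤ ∫ ω in T, f ω ∂ℙ := hoptC XhatA
  have := le_trans h1 hex
  gcongr
end

section
/- For a density p nondecreasing on [a,b] (a 'rising interval') with p(a) < p(b) and positive mass, the conditional mean of X on [a,b] is at least the midpoint (a+b)/2. -/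
/-!
Reflecting `[a, b]` through its midpoint `m` shows
`2 ∫ (x - m) p x = ∫ (x - m) (p x - p (a + b - x))`, and by monotonicity the two factors of the
integrand have the same sign. Hence `∫ x p x ≥ m ∫ p x`, and dividing by the mass gives the claim.
-/

open MeasureTheory Set

theorem MonotoneOn.intervalIntegrable_of_le {f : ℝ → ℝ} {a b : ℝ} (hab : a ≤ b)
    (hf : MonotoneOn f (Icc a b)) : IntervalIntegrable f volume a b :=
  (uIcc_of_le hab ▸ hf).intervalIntegrable

theorem MonotoneOn.sub_midpoint_mul_sub_reflect_nonneg {f : ℝ → ℝ} {a b x : ℝ}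
    (hf : MonotoneOn f (Icc a b)) (hx : x ∈ Icc a b) :
    0 ≤ (x - (a + b) / 2) * (f x - f (a + b - x)) := by
  have hx' : a + b - x ∈ Icc a b := ⟨by linarith [hx.2], by linarith [hx.1]⟩
  have h := (monovaryOn_id_iff.2 hf).sub_mul_sub_nonneg hx' hx
  simp only [id] at h
  nlinarith

theorem MonotoneOn.integral_sub_midpoint_mul_nonneg {f : ℝ → ℝ} {a b : ℝ} (hab : a ≤ b)
    (hf : MonotoneOn f (Icc a b)) :
    0 ≤ ∫ x in a..b, (x - (a + b) / 2) * f x := by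
  set m := (a + b) / 2
  have hfi := hf.intervalIntegrable_of_le hab
  have hg : IntervalIntegrable (fun x ↦ (x - m) * f x) volume a b :=
    hfi.continuousOn_mul (by fun_prop)
  have hg' : IntervalIntegrable (fun x ↦ (x - m) * f (a + b - x)) volume a b := by
    have h := hfi.comp_sub_left (a + b)
    simp only [add_sub_cancel_right, add_sub_cancel_left] at h
    exact h.symm.continuousOn_mul (by fun_prop)
  -- the substitution `x ↦ a + b - x` maps `[a, b]` onto itself and negates `x - m`
  have hreflect : ∫ x in a..b, (x - m) * f (a + b - x) = -∫ x in a..b, (x - m) * f x := by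
    have h := intervalIntegral.integral_comp_sub_left (a := a) (b := b)
      (fun y ↦ (y - m) * f y) (a + b)
    simp only [add_sub_cancel_right, add_sub_cancel_left] at h
    rw [← h, ← intervalIntegral.integral_neg]
    congr 1 with x
    ring
  have hpair : 0 ≤ ∫ x in a..b, (x - m) * (f x - f (a + b - x)) :=
    intervalIntegral.integral_nonneg hab fun x hx ↦ hf.sub_midpoint_mul_sub_reflect_nonneg hx
  simp only [mul_sub] at hpair
  rw [intervalIntegral.integral_sub hg hg', hreflect] at hpair
  linarith

theorem intervalIntegral.integral_sub_const_mul {f : ℝ → ℝ} {a b : ℝ}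
    (hf : IntervalIntegrable f volume a b) (c : ℝ) :
    ∫ x in a..b, (x - c) * f x = (∫ x in a..b, x * f x) - c * ∫ x in a..b, f x := by
  simp only [sub_mul]
  rw [intervalIntegral.integral_sub (hf.continuousOn_mul (by fun_prop)) (hf.const_mul c),
    intervalIntegral.integral_const_mul]

theorem rising_interval_mean_ge_midpoint_general
    (p : ℝ → ℝ) (a b : ℝ) (hab : a < b)
    (hmono : MonotoneOn p (Set.Icc a b))
    (hmass : 0 < ∫ x in a..b, p x) :
    (a + b) / 2 ≤ (∫ x in a..b, x * p x) / (∫ x in a..b, p x) := by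
  have hcentered := hmono.integral_sub_midpoint_mul_nonneg hab.le
  rw [intervalIntegral.integral_sub_const_mul (hmono.intervalIntegrable_of_le hab.le)] at hcentered
  rw [le_div_iff₀ hmass]
  linarith

/-- On a rising interval `[a,b]` (density nondecreasing, strictly higher at the
right end) with positive mass, the conditional mean lies at or to the right of
the midpoint. -/
theorem rising_interval_mean_ge_midpoint
    (p : ℝ → ℝ) (a b : ℝ) (hab : a < b)
    (hp : ∀ x, 0 ≤ p x)
    (hmono : MonotoneOn p (Set.Icc a b))
    (hrise : p a < p b)
    (hint : IntegrableOn p (Set.Icc a b))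
    (hmass : 0 < ∫ x in a..b, p x) :
    (a + b) / 2 ≤ (∫ x in a..b, x * p x) / (∫ x in a..b, p x) :=
  rising_interval_mean_ge_midpoint_general p a b hab hmono hmass
end

section
/- Combined rate bound via the Gauss inequality: for X a real random variable with a unimodal density about mode μ, finite variance σ², and τ² := (E[X]−μ)² + σ², we have P(|X−μ| > k) ≤ (4/9)·τ²/k² whenever k ≥ (2/√3)·τ. -/
open MeasureTheory Set


lemma cube_ineq (k t : ℝ) (hk : 0 ≤ k) (ht : 0 ≤ t) :
    27 / 4 * k ^ 2 * t ≤ (k + t) ^ 3 := by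
  nlinarith [mul_nonneg (sq_nonneg (t - k / 2)) (by linarith : (0:ℝ) ≤ t + 4 * k)]

lemma reflect_setIntegral (μ : ℝ) (f : ℝ → ℝ) (s : Set ℝ) :
    ∫ x in (fun x => 2 * μ - x) ⁻¹' s, f (2 * μ - x) = ∫ x in s, f x := by
  have hme : MeasurableEmbedding (fun x : ℝ => 2 * μ - x) :=
    (Homeomorph.subLeft (2 * μ)).isClosedEmbedding.measurableEmbedding
  have hmap : Measure.map (fun x : ℝ => 2 * μ - x) volume = volume := by
    have h1 : (fun x : ℝ => 2 * μ - x) = (fun y : ℝ => 2 * μ + y) ∘ fun x : ℝ => -x := by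
      funext x; simp [sub_eq_add_neg]
    rw [h1, ← Measure.map_map (measurable_const_add _) measurable_neg,
      Measure.map_neg_eq_self]
    exact map_add_left_eq_self volume (2 * μ)
  have := hme.setIntegral_map (μ := volume) f s
  rw [hmap] at this
  exact this.symm

lemma reflect_integrable (μ : ℝ) (f : ℝ → ℝ) (hf : Integrable f) :
    Integrable (fun x => f (2 * μ - x)) := by
  have hme : MeasurableEmbedding (fun x : ℝ => 2 * μ - x) :=
    (Homeomorph.subLeft (2 * μ)).isClosedEmbedding.measurableEmbedding
  have hmap : Measure.map (fun x : ℝ => 2 * μ - x) volume = volume := by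
    have h1 : (fun x : ℝ => 2 * μ - x) = (fun y : ℝ => 2 * μ + y) ∘ fun x : ℝ => -x := by
      funext x; simp [sub_eq_add_neg]
    rw [h1, ← Measure.map_map (measurable_const_add _) measurable_neg,
      Measure.map_neg_eq_self]
    exact map_add_left_eq_self volume (2 * μ)
  have : Integrable f (Measure.map (fun x : ℝ => 2 * μ - x) volume) := by rw [hmap]; exact hf
  exact hme.integrable_map_iff.mp this

lemma gauss_right (p : ℝ → ℝ) (μ k : ℝ) (hp : ∀ x, 0 ≤ p x)
    (hanti : AntitoneOn p (Set.Ici μ)) (hk : 0 < k)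
    (hint : Integrable p) (hf : Integrable fun x => (x - μ) ^ 2 * p x) :
    9 / 4 * k ^ 2 * (∫ x in Ioi (μ + k), p x) ≤
      (∫ x in Ioc μ (μ + k), (x - μ) ^ 2 * p x) + ∫ x in Ioi (μ + k), (x - μ) ^ 2 * p x := by
  set a := ∫ x in Ioi (μ + k), p x with ha_def
  have ha : 0 ≤ a := setIntegral_nonneg measurableSet_Ioi fun x _ => hp x
  have hI0 : 0 ≤ ∫ x in Ioc μ (μ + k), (x - μ) ^ 2 * p x :=
    setIntegral_nonneg measurableSet_Ioc fun x _ => mul_nonneg (sq_nonneg _) (hp x)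
  have hT0 : 0 ≤ ∫ x in Ioi (μ + k), (x - μ) ^ 2 * p x :=
    setIntegral_nonneg measurableSet_Ioi fun x _ => mul_nonneg (sq_nonneg _) (hp x)
  set c := p (μ + k) with hc_def
  have hc0 : 0 ≤ c := hp _
  rcases eq_or_lt_of_le hc0 with hc | hc
  · -- c = 0 : the tail mass vanishes
    have hzero : ∀ x ∈ Ioi (μ + k), p x = 0 := by
      intro x hx
      have hx1 : μ + k ∈ Ici μ := by simp; linarith
      have hx2 : x ∈ Ici μ := by simp at hx ⊢; linarith
      have := hanti hx1 hx2 (le_of_lt hx)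
      have := hp x
      linarith [hc ▸ this]
    have : a = 0 := by
      rw [ha_def, setIntegral_congr_fun measurableSet_Ioi hzero, integral_zero]
    rw [this]
    simpa using add_nonneg hI0 hT0
  · -- c > 0
    set b := a / c with hb_def
    have hb0 : 0 ≤ b := div_nonneg ha hc0
    have hcb : c * b = a := by
      rw [hb_def, mul_div_assoc']; exact mul_div_cancel_left₀ a (ne_of_gt hc)
    -- inner bound
    have hcont : Continuous fun x : ℝ => (x - μ) ^ 2 * c :=
      (((continuous_id.sub continuous_const).pow 2).mul continuous_const)
    have hinner : c * k ^ 3 / 3 ≤ ∫ x in Ioc μ (μ + k), (x - μ) ^ 2 * p x := by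
      have hmono' : ∀ x ∈ Ioc μ (μ + k), (x - μ) ^ 2 * c ≤ (x - μ) ^ 2 * p x := by
        intro x hx
        obtain ⟨hx1, hx2⟩ := hx
        have hcx : c ≤ p x :=
          hanti (by simp; linarith : x ∈ Ici μ) (by simp; linarith : μ + k ∈ Ici μ) hx2
        exact mul_le_mul_of_nonneg_left hcx (sq_nonneg _)
      have hle := setIntegral_mono_on (hcont.integrableOn_Ioc) (hf.integrableOn)
        measurableSet_Ioc hmono'
      have hcalc : ∫ x in Ioc μ (μ + k), (x - μ) ^ 2 * c = c * k ^ 3 / 3 := by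
        rw [← intervalIntegral.integral_of_le (by linarith : μ ≤ μ + k),
          intervalIntegral.integral_mul_const,
          intervalIntegral.integral_comp_sub_right (fun x => x ^ 2) μ]
        simp [integral_pow]
        ring
      linarith [hcalc ▸ hle]
    -- tail bound
    set M := (k + b) ^ 2 with hM_def
    have hg_int : Integrable fun x => ((x - μ) ^ 2 - M) * p x := by
      have : (fun x => ((x - μ) ^ 2 - M) * p x)
          = fun x => (x - μ) ^ 2 * p x - M * p x := by funext x; ring
      rw [this]; exact hf.sub (hint.const_mul M)
    have hsplitT : ∫ x in Ioi (μ + k), (x - μ) ^ 2 * p x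
        = (∫ x in Ioi (μ + k), ((x - μ) ^ 2 - M) * p x) + M * a := by
      have h1 : ∫ x in Ioi (μ + k), (x - μ) ^ 2 * p x
          = ∫ x in Ioi (μ + k), (((x - μ) ^ 2 - M) * p x + M * p x) := by
        congr 1; funext x; ring
      rw [h1, integral_add hg_int.integrableOn ((hint.const_mul M).integrableOn),
        integral_const_mul]
    have hsplitset : Ioc (μ + k) (μ + k + b) ∪ Ioi (μ + k + b) = Ioi (μ + k) :=
      Ioc_union_Ioi_eq_Ioi (by linarith)
    have hTsum : ∫ x in Ioi (μ + k), ((x - μ) ^ 2 - M) * p x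
        = (∫ x in Ioc (μ + k) (μ + k + b), ((x - μ) ^ 2 - M) * p x)
          + ∫ x in Ioi (μ + k + b), ((x - μ) ^ 2 - M) * p x := by
      rw [← hsplitset, setIntegral_union (Ioc_disjoint_Ioi le_rfl) measurableSet_Ioi
        hg_int.integrableOn hg_int.integrableOn]
    have hfar : 0 ≤ ∫ x in Ioi (μ + k + b), ((x - μ) ^ 2 - M) * p x := by
      refine setIntegral_nonneg measurableSet_Ioi fun x hx => ?_
      have hx' : μ + k + b < x := hx
      have hMx : M ≤ (x - μ) ^ 2 := by
        rw [hM_def]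
        exact pow_le_pow_left₀ (by linarith) (by linarith) 2
      exact mul_nonneg (by linarith) (hp x)
    have hcont2 : Continuous fun x : ℝ => ((x - μ) ^ 2 - M) * c :=
      ((((continuous_id.sub continuous_const).pow 2).sub continuous_const).mul continuous_const)
    have hnear : c * (((k + b) ^ 3 - k ^ 3) / 3 - M * b)
        ≤ ∫ x in Ioc (μ + k) (μ + k + b), ((x - μ) ^ 2 - M) * p x := by
      have hmono' : ∀ x ∈ Ioc (μ + k) (μ + k + b),
          ((x - μ) ^ 2 - M) * c ≤ ((x - μ) ^ 2 - M) * p x := by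
        intro x hx
        obtain ⟨hx1, hx2⟩ := hx
        have hcx : p x ≤ c :=
          hanti (by simp; linarith : μ + k ∈ Ici μ) (by simp; linarith : x ∈ Ici μ)
            (le_of_lt hx1)
        have hMx : (x - μ) ^ 2 - M ≤ 0 := by
          have : (x - μ) ^ 2 ≤ (k + b) ^ 2 := pow_le_pow_left₀ (by linarith) (by linarith) 2
          rw [hM_def]; linarith
        exact mul_le_mul_of_nonpos_left hcx hMx
      have hle := setIntegral_mono_on (hcont2.integrableOn_Ioc) (hg_int.integrableOn)
        measurableSet_Ioc hmono'
      have hcalc : ∫ x in Ioc (μ + k) (μ + k + b), ((x - μ) ^ 2 - M) * c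
          = c * (((k + b) ^ 3 - k ^ 3) / 3 - M * b) := by
        rw [← intervalIntegral.integral_of_le (by linarith : μ + k ≤ μ + k + b),
          intervalIntegral.integral_mul_const,
          intervalIntegral.integral_comp_sub_right (fun x => x ^ 2 - M) μ]
        have : μ + k - μ = k := by ring
        have h2 : μ + k + b - μ = k + b := by ring
        rw [this, h2, intervalIntegral.integral_sub (by
            exact (continuous_pow 2).intervalIntegrable _ _)
          (intervalIntegrable_const), integral_pow]
        simp
        ring
      linarith [hcalc ▸ hle]
    -- combine
    have hT : c * ((k + b) ^ 3 - k ^ 3) / 3 ≤ ∫ x in Ioi (μ + k), (x - μ) ^ 2 * p x := by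
      rw [hsplitT, hTsum, ← hcb]
      nlinarith [hnear, hfar]
    have hkey : 27 / 4 * k ^ 2 * b ≤ (k + b) ^ 3 := cube_ineq k b (le_of_lt hk) hb0
    rw [← hcb]
    nlinarith [hinner, hT, hc]

/-- Gauss inequality for a unimodal density `p` with mode `μ`: with
`τ² = (mean − μ)² + variance`, for `k ≥ (2/√3)·τ` the tail mass outside
`[μ−k, μ+k]` is at most `(4/9)·τ²/k²`. -/
theorem gauss_inequality_tail_bound
    (p : ℝ → ℝ) (μ k : ℝ)
    (hp : ∀ x, 0 ≤ p x)
    (hmono : MonotoneOn p (Set.Iic μ))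
    (hanti : AntitoneOn p (Set.Ici μ))
    (hint : Integrable p)
    (hone : ∫ x, p x = 1)
    (hint1 : Integrable (fun x => x * p x))
    (hint2 : Integrable (fun x => x ^ 2 * p x))
    (mean σ2 τ2 : ℝ)
    (hmean : mean = ∫ x, x * p x)
    (hσ2 : σ2 = ∫ x, (x - mean) ^ 2 * p x)
    (hτ2 : τ2 = (mean - μ) ^ 2 + σ2)
    (hk : 0 < k) (hkτ : 2 / Real.sqrt 3 * Real.sqrt τ2 ≤ k) :
    ∫ x in {x : ℝ | k < |x - μ|}, p x ≤ 4 / 9 * τ2 / k ^ 2 := by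
  have hF : Integrable fun x => (x - μ) ^ 2 * p x := by
    have h : (fun x => (x - μ) ^ 2 * p x)
        = fun x => x ^ 2 * p x - 2 * μ * (x * p x) + μ ^ 2 * p x := by funext x; ring
    rw [h]
    exact (hint2.sub ((hint1.const_mul (2 * μ)))).add (hint.const_mul (μ ^ 2))
  -- τ2 is the second moment about μ
  have hτint : τ2 = ∫ x, (x - μ) ^ 2 * p x := by
    have e1 : ∀ m : ℝ, Integrable (fun x => (x - m) ^ 2 * p x) → 
        ∫ x, (x - m) ^ 2 * p x = (∫ x, x ^ 2 * p x) - 2 * m * mean + m ^ 2 := by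
      intro m _
      have h : (fun x => (x - m) ^ 2 * p x)
          = fun x => x ^ 2 * p x - 2 * m * (x * p x) + m ^ 2 * p x := by funext x; ring
      have i1 : Integrable (fun x => x ^ 2 * p x - 2 * m * (x * p x)) :=
        hint2.sub (hint1.const_mul (2 * m))
      have i2 : Integrable (fun x => m ^ 2 * p x) := hint.const_mul (m ^ 2)
      have i3 : Integrable (fun x => 2 * m * (x * p x)) := hint1.const_mul (2 * m)
      rw [h, integral_add i1 i2, integral_sub hint2 i3, integral_const_mul, integral_const_mul,
        hone, hmean]
      ring
    have hσ : Integrable fun x => (x - mean) ^ 2 * p x := by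
      have h : (fun x => (x - mean) ^ 2 * p x)
          = fun x => x ^ 2 * p x - 2 * mean * (x * p x) + mean ^ 2 * p x := by funext x; ring
      rw [h]
      exact (hint2.sub ((hint1.const_mul (2 * mean)))).add (hint.const_mul (mean ^ 2))
    rw [e1 μ hF, hτ2, hσ2, e1 mean hσ]
    ring
  -- right tail bound
  have hR := gauss_right p μ k hp hanti hk hint hF
  -- left tail bound by reflection
  have hrefl_eq : ∀ x : ℝ, (x - μ) ^ 2 * p (2 * μ - x) = ((2 * μ - x) - μ) ^ 2 * p (2 * μ - x) := by
    intro x; ring_nf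
  have hqint : Integrable fun x => p (2 * μ - x) := reflect_integrable μ p hint
  have hqF : Integrable fun x => (x - μ) ^ 2 * p (2 * μ - x) := by
    have := reflect_integrable μ (fun y => (y - μ) ^ 2 * p y) hF
    refine this.congr (ae_of_all _ fun x => ?_)
    simp only
    ring_nf
  have hqanti : AntitoneOn (fun x => p (2 * μ - x)) (Set.Ici μ) := by
    intro x hx y hy hxy
    simp only
    have h1 : 2 * μ - y ∈ Iic μ := by simp at hy ⊢; linarith
    have h2 : 2 * μ - x ∈ Iic μ := by simp at hx ⊢; linarith
    exact hmono h1 h2 (by linarith)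
  have hL0 := gauss_right (fun x => p (2 * μ - x)) μ k (fun x => hp _) hqanti hk hqint hqF
  -- transfer the three integrals in hL0
  have hpre1 : (fun x : ℝ => 2 * μ - x) ⁻¹' (Iio (μ - k)) = Ioi (μ + k) := by
    ext x; simp only [mem_preimage, mem_Iio, mem_Ioi]; constructor <;> intro h <;> linarith
  have hpre2 : (fun x : ℝ => 2 * μ - x) ⁻¹' (Ico (μ - k) μ) = Ioc μ (μ + k) := by
    ext x; simp only [mem_preimage, mem_Ico, mem_Ioc]
    constructor
    · rintro ⟨h1, h2⟩; constructor <;> linarith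
    · rintro ⟨h1, h2⟩; constructor <;> linarith
  have ht1 : ∫ x in Ioi (μ + k), p (2 * μ - x) = ∫ x in Iio (μ - k), p x := by
    rw [← hpre1]; exact reflect_setIntegral μ p (Iio (μ - k))
  have ht2 : ∫ x in Ioi (μ + k), (x - μ) ^ 2 * p (2 * μ - x)
      = ∫ x in Iio (μ - k), (x - μ) ^ 2 * p x := by
    rw [← hpre1, ← reflect_setIntegral μ (fun y => (y - μ) ^ 2 * p y) (Iio (μ - k))]
    refine setIntegral_congr_fun (hpre1 ▸ measurableSet_Ioi) fun x _ => ?_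
    show (x - μ) ^ 2 * p (2 * μ - x) = (2 * μ - x - μ) ^ 2 * p (2 * μ - x)
    ring
  have ht3 : ∫ x in Ioc μ (μ + k), (x - μ) ^ 2 * p (2 * μ - x)
      = ∫ x in Ico (μ - k) μ, (x - μ) ^ 2 * p x := by
    rw [← hpre2, ← reflect_setIntegral μ (fun y => (y - μ) ^ 2 * p y) (Ico (μ - k) μ)]
    refine setIntegral_congr_fun (hpre2 ▸ measurableSet_Ioc) fun x _ => ?_
    show (x - μ) ^ 2 * p (2 * μ - x) = (2 * μ - x - μ) ^ 2 * p (2 * μ - x)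
    ring
  rw [ht1, ht2, ht3] at hL0
  -- the four pieces are dominated by τ2
  have hsum : (∫ x in Ico (μ - k) μ, (x - μ) ^ 2 * p x) + (∫ x in Iio (μ - k), (x - μ) ^ 2 * p x)
      + ((∫ x in Ioc μ (μ + k), (x - μ) ^ 2 * p x) + ∫ x in Ioi (μ + k), (x - μ) ^ 2 * p x)
      ≤ τ2 := by
    rw [hτint]
    have hd1 : Disjoint (Iio (μ - k)) (Ico (μ - k) μ) := by
      refine disjoint_left.mpr fun x hx hx' => ?_
      simp only [mem_Iio] at hx; exact absurd hx'.1 (not_le.mpr hx)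
    have hd2 : Disjoint (Ioc μ (μ + k)) (Ioi (μ + k)) := Ioc_disjoint_Ioi le_rfl
    have hu1 : Iio (μ - k) ∪ Ico (μ - k) μ = Iio μ := by
      ext x; simp only [mem_union, mem_Iio, mem_Ico]
      constructor
      · rintro (h | ⟨h1, h2⟩) <;> linarith
      · intro h
        rcases lt_or_ge x (μ - k) with h' | h'
        · exact Or.inl h'
        · exact Or.inr ⟨h', h⟩
    have hu2 : Ioc μ (μ + k) ∪ Ioi (μ + k) = Ioi μ := Ioc_union_Ioi_eq_Ioi (by linarith)
    have e1 : (∫ x in Iio (μ - k), (x - μ) ^ 2 * p x) + (∫ x in Ico (μ - k) μ, (x - μ) ^ 2 * p x)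
        = ∫ x in Iio μ, (x - μ) ^ 2 * p x := by
      rw [← setIntegral_union hd1 measurableSet_Ico hF.integrableOn hF.integrableOn, hu1]
    have e2 : (∫ x in Ioc μ (μ + k), (x - μ) ^ 2 * p x) + (∫ x in Ioi (μ + k), (x - μ) ^ 2 * p x)
        = ∫ x in Ioi μ, (x - μ) ^ 2 * p x := by
      rw [← setIntegral_union hd2 measurableSet_Ioi hF.integrableOn hF.integrableOn, hu2]
    have e3 : (∫ x in Iio μ, (x - μ) ^ 2 * p x) + (∫ x in Ioi μ, (x - μ) ^ 2 * p x)
        = ∫ x in Iio μ ∪ Ioi μ, (x - μ) ^ 2 * p x := by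
      rw [setIntegral_union (by
        refine disjoint_left.mpr fun x hx hx' => ?_
        simp only [mem_Iio] at hx; simp only [mem_Ioi] at hx'; linarith)
        measurableSet_Ioi hF.integrableOn hF.integrableOn]
    have e4 : ∫ x in Iio μ ∪ Ioi μ, (x - μ) ^ 2 * p x ≤ ∫ x, (x - μ) ^ 2 * p x :=
      setIntegral_le_integral hF (ae_of_all _ fun x => mul_nonneg (sq_nonneg _) (hp x))
    linarith [e1, e2, e3 ▸ e4]
  -- the tail set
  have hset : {x : ℝ | k < |x - μ|} = Iio (μ - k) ∪ Ioi (μ + k) := by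
    ext x
    simp only [mem_setOf_eq, mem_union, mem_Iio, mem_Ioi, lt_abs]
    constructor
    · rintro (h | h)
      · right; linarith
      · left; linarith
    · rintro (h | h)
      · right; linarith
      · left; linarith
  have hdisj : Disjoint (Iio (μ - k)) (Ioi (μ + k)) := by
    refine disjoint_left.mpr fun x hx hx' => ?_
    simp only [mem_Iio] at hx; simp only [mem_Ioi] at hx'; linarith
  have hasum : ∫ x in {x : ℝ | k < |x - μ|}, p x
      = (∫ x in Iio (μ - k), p x) + ∫ x in Ioi (μ + k), p x := by
    rw [hset, setIntegral_union hdisj measurableSet_Ioi hint.integrableOn hint.integrableOn]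
  rw [hasum]
  rw [le_div_iff₀ (pow_pos hk 2)]
  nlinarith [hR, hL0, hsum]
end

section
/- Mean-square distortion bound for probabilistic sampling: with X unimodal about μ with finite variance σ², τ² = (E[X]−μ)² + σ², and silence set S = [μ−k, μ+k] with k ≥ (2/√3)τ and P(X∈S) > 0, the quantity E[(X−μ)²·1_{X∈S}] is bounded above by min(σ², k²/3), and hence the unconditional distortion E[(X−μ)² 1_{X∈S}] ≤ P(X∈S)·min(σ², k²/3). -/
open MeasureTheory Set

set_option maxHeartbeats 1000000 in
/-- Mean-square distortion bound for probabilistic sampling with a silence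
interval `S = [μ−k, μ+k]`: for a density unimodal and symmetric about `μ`
(so that the mean is `μ` and `τ² = σ²`), with `k ≥ (2/√3)·σ`, the conditional
mean-square error given `X ∈ S` is at most `k²/3` and the unconditional
restricted distortion `E[(X−μ)²·1_{X∈S}]` is at most `σ²`. -/
theorem distortion_bound_for_probabilistic_sampling
    (p : ℝ → ℝ) (μ k : ℝ)
    (hp : ∀ x, 0 ≤ p x)
    (hmono : MonotoneOn p (Set.Iic μ))
    (hanti : AntitoneOn p (Set.Ici μ))
    (hsymm : ∀ x, p (μ + x) = p (μ - x))
    (hint : Integrable p)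
    (hone : ∫ x, p x = 1)
    (hint2 : Integrable (fun x => (x - μ) ^ 2 * p x))
    (σ2 : ℝ) (hσ2 : σ2 = ∫ x, (x - μ) ^ 2 * p x)
    (hk : 0 < k) (hkσ : 2 / Real.sqrt 3 * Real.sqrt σ2 ≤ k)
    (hpos : 0 < ∫ x in Set.Icc (μ - k) (μ + k), p x) :
    (∫ x in Set.Icc (μ - k) (μ + k), (x - μ) ^ 2 * p x) /
        (∫ x in Set.Icc (μ - k) (μ + k), p x) ≤ k ^ 2 / 3 ∧
      (∫ x in Set.Icc (μ - k) (μ + k), (x - μ) ^ 2 * p x) ≤ σ2 ∧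
      (∫ x in Set.Icc (μ - k) (μ + k), (x - μ) ^ 2 * p x) ≤
        (∫ x in Set.Icc (μ - k) (μ + k), p x) * min σ2 (k ^ 2 / 3) := by
  set S : Set ℝ := Set.Icc (μ - k) (μ + k) with hSdef
  have hS : MeasurableSet S := measurableSet_Icc
  set a : ℝ := ∫ x in S, (x - μ) ^ 2 * p x with ha
  set P : ℝ := ∫ x in S, p x with hP
  have hsqrt3 : (1:ℝ) ≤ Real.sqrt 3 := by
    rw [show (1:ℝ) = Real.sqrt 1 by simp]
    exact Real.sqrt_le_sqrt (by norm_num)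
  have hsqrt3pos : (0:ℝ) < Real.sqrt 3 := by linarith
  set c : ℝ := μ + k / Real.sqrt 3 with hc
  have hcI : μ ≤ c ∧ c ≤ μ + k := by
    rw [hc]
    constructor
    · have : 0 ≤ k / Real.sqrt 3 := le_of_lt (div_pos hk hsqrt3pos)
      linarith
    · have : k / Real.sqrt 3 ≤ k := div_le_self hk.le hsqrt3
      linarith
  have hcsq : (c - μ) ^ 2 = k ^ 2 / 3 := by
    have h1 : c - μ = k / Real.sqrt 3 := by rw [hc]; ring
    rw [h1, div_pow, Real.sq_sqrt (by norm_num : (0:ℝ) ≤ 3)]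
  -- helper for right half
  have hright : ∀ y ∈ Set.Icc μ (μ + k),
      ((y - μ) ^ 2 - k ^ 2 / 3) * (p y - p c) ≤ 0 := by
    intro y hy
    rcases le_or_gt y c with h | h
    · have hg : (y - μ) ^ 2 ≤ k ^ 2 / 3 := by
        rw [← hcsq]
        have h1 : 0 ≤ y - μ := by linarith [hy.1]
        nlinarith [hcI.1]
      have hpy : p c ≤ p y := hanti (by exact hy.1 : y ∈ Set.Ici μ) (by exact hcI.1 : c ∈ Set.Ici μ) h
      exact mul_nonpos_of_nonpos_of_nonneg (by linarith) (by linarith)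
    · have hg : k ^ 2 / 3 ≤ (y - μ) ^ 2 := by
        rw [← hcsq]
        have h1 : 0 ≤ c - μ := by linarith [hcI.1]
        nlinarith
      have hpy : p y ≤ p c := hanti (by exact hcI.1 : c ∈ Set.Ici μ) (by exact hy.1 : y ∈ Set.Ici μ) h.le
      exact mul_nonpos_of_nonneg_of_nonpos (by linarith) (by linarith)
  -- key pointwise inequality on S
  have hkey : ∀ x ∈ S, ((x - μ) ^ 2 - k ^ 2 / 3) * p x ≤ ((x - μ) ^ 2 - k ^ 2 / 3) * p c := by
    intro x hx
    rw [Set.mem_Icc] at hx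
    rcases le_or_gt μ x with h | h
    · have := hright x ⟨h, hx.2⟩
      nlinarith
    · -- reflect: y = 2*μ - x
      have hpx : p x = p (2 * μ - x) := by
        have h1 := hsymm (x - μ)
        have e1 : μ + (x - μ) = x := by ring
        have e2 : μ - (x - μ) = 2 * μ - x := by ring
        rw [e1, e2] at h1
        exact h1
      have hy : 2 * μ - x ∈ Set.Icc μ (μ + k) := ⟨by linarith, by linarith [hx.1]⟩
      have := hright (2 * μ - x) hy
      have e3 : (2 * μ - x - μ) ^ 2 = (x - μ) ^ 2 := by ring
      rw [e3] at this
      rw [hpx]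
      nlinarith
  -- integrability
  have hint2' : IntegrableOn (fun x => (x - μ) ^ 2 * p x) S := hint2.integrableOn
  have hintp' : IntegrableOn p S := hint.integrableOn
  have hf1 : IntegrableOn (fun x => ((x - μ) ^ 2 - k ^ 2 / 3) * p x) S := by
    have : (fun x => ((x - μ) ^ 2 - k ^ 2 / 3) * p x)
        = fun x => (x - μ) ^ 2 * p x - k ^ 2 / 3 * p x := by
      funext x; ring
    rw [this]
    exact hint2'.sub (hintp'.const_mul _)
  have hf2 : IntegrableOn (fun x => ((x - μ) ^ 2 - k ^ 2 / 3) * p c) S := by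
    apply Continuous.integrableOn_Icc
    exact (((continuous_id.sub continuous_const).pow 2).sub continuous_const).mul
      continuous_const
  -- the uniform integral vanishes
  have hzero : (∫ x in S, ((x - μ) ^ 2 - k ^ 2 / 3)) = 0 := by
    rw [hSdef, MeasureTheory.integral_Icc_eq_integral_Ioc,
      ← intervalIntegral.integral_of_le (by linarith : μ - k ≤ μ + k)]
    have := intervalIntegral.integral_comp_sub_right
      (a := μ - k) (b := μ + k) (fun x => x ^ 2 - k ^ 2 / 3) μ
    simp only [show μ - k - μ = -k by ring, show μ + k - μ = k by ring] at this
    rw [this]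
    rw [intervalIntegral.integral_sub (by apply intervalIntegral.intervalIntegrable_pow)
      (by apply intervalIntegrable_const)]
    rw [integral_pow, intervalIntegral.integral_const, smul_eq_mul]
    ring
  -- conditional bound: a ≤ (k^2/3) * P
  have hmain : a ≤ k ^ 2 / 3 * P := by
    have h1 : (∫ x in S, ((x - μ) ^ 2 - k ^ 2 / 3) * p x)
        ≤ ∫ x in S, ((x - μ) ^ 2 - k ^ 2 / 3) * p c :=
      setIntegral_mono_on hf1 hf2 hS hkey
    have h2 : (∫ x in S, ((x - μ) ^ 2 - k ^ 2 / 3) * p c)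
        = (∫ x in S, ((x - μ) ^ 2 - k ^ 2 / 3)) * p c := by
      rw [integral_mul_const]
    have h3 : (∫ x in S, ((x - μ) ^ 2 - k ^ 2 / 3) * p x)
        = a - k ^ 2 / 3 * P := by
      have : (fun x => ((x - μ) ^ 2 - k ^ 2 / 3) * p x)
          = fun x => (x - μ) ^ 2 * p x - k ^ 2 / 3 * p x := by
        funext x; ring
      rw [this, integral_sub hint2' (hintp'.const_mul _), integral_const_mul]
    rw [h3, h2, hzero, zero_mul] at h1
    linarith
  -- a ≤ σ2
  have hle2 : a ≤ σ2 := by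
    rw [hσ2]
    exact setIntegral_le_integral hint2
      (Filter.Eventually.of_forall fun x => mul_nonneg (sq_nonneg _) (hp x))
  -- a ≥ 0, P ≤ 1
  have hanonneg : 0 ≤ a :=
    setIntegral_nonneg hS fun x _ => mul_nonneg (sq_nonneg _) (hp x)
  have hPle1 : P ≤ 1 := by
    rw [← hone]
    exact setIntegral_le_integral hint (Filter.Eventually.of_forall hp)
  -- tail bound: σ2 ≥ a + k^2 * (1 - P)
  have hsplit : a + (∫ x in Sᶜ, (x - μ) ^ 2 * p x) = σ2 := by
    rw [hσ2]; exact integral_add_compl hS hint2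
  have hPsplit : P + (∫ x in Sᶜ, p x) = 1 := by
    rw [← hone]; exact integral_add_compl hS hint
  have htail : k ^ 2 * (∫ x in Sᶜ, p x) ≤ ∫ x in Sᶜ, (x - μ) ^ 2 * p x := by
    rw [← integral_const_mul]
    apply setIntegral_mono_on ((hint.integrableOn).const_mul _) hint2.integrableOn hS.compl
    intro x hx
    have hx' : x < μ - k ∨ μ + k < x := by
      simp only [hSdef, Set.mem_compl_iff, Set.mem_Icc, not_and_or, not_le] at hx
      exact hx
    have hxsq : k ^ 2 ≤ (x - μ) ^ 2 := by
      rcases hx' with h | h <;> nlinarith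
    exact mul_le_mul_of_nonneg_right hxsq (hp x)
  have hσa : a + k ^ 2 * (1 - P) ≤ σ2 := by
    have : (∫ x in Sᶜ, p x) = 1 - P := by linarith
    rw [this] at htail
    linarith
  -- conclude
  clear_value a P
  refine ⟨?_, hle2, ?_⟩
  · rw [div_le_iff₀ hpos]
    linarith
  · rcases le_total σ2 (k ^ 2 / 3) with h | h
    · rw [min_eq_left h]
      nlinarith
    · rw [min_eq_right h]
      linarith
end
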